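/- Let V, W be subspaces of ℝ^n and let v ∈ V be a nonzero vector with P_W v ≠ 0, where P_W is orthogonal projection onto W. Then the angle between P_W v and V is at most the maximum principal angle between V and W. (This justifies that θ₂* in the paper is also bounded by the maximum principal angle.) -/

import Mathlib

open Matrix

/-- The smallest singular value of a real `p × q` matrix `M`, i.e. the square root of the
smallest eigenvalue of `M * Mᵀ` (over `ℝ`, `Mᴴ = Mᵀ`). -/
noncomputable def smallestSingularValue {p q : ℕ} (M : Matrix (Fin p) (Fin q) ℝ) : ℝ :=
  Real.sqrt (⨅ i, (Matrix.isHermitian_mul_conjTranspose_self M).eigenvalues i)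

/-- The angle between a nonzero vector `v` and a subspace `U`, `arccos (‖P_U v‖ / ‖v‖)`. -/
noncomputable def angleToSubspace {n : ℕ}
    (U : Submodule ℝ (EuclideanSpace ℝ (Fin n)))
    (v : EuclideanSpace ℝ (Fin n)) : ℝ :=
  Real.arccos (‖((Submodule.orthogonalProjection U v : U) : EuclideanSpace ℝ (Fin n))‖ / ‖v‖)

/-!
Write `v = A c` with `c = Aᵀ v` and put `M = Aᵀ B`. Since `A` and `B` have orthonormal columns,
`P_W v = B Mᵀ c` and `P_V P_W v = A M Mᵀ c`, so the cosine of the angle in question is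
`‖M Mᵀ c‖ / ‖Mᵀ c‖`. For `S = M Mᵀ` we have `‖Mᵀ c‖² = ⟪c, S c⟫`, and expanding `c` in an
orthonormal eigenbasis of the positive semidefinite `S` gives `λ_min(S) ⟪c, S c⟫ ≤ ‖S c‖²`.
Hence the cosine is at least `√λ_min(S) = σ_min(M)`, and `arccos` is antitone.
-/

open scoped RealInnerProductSpace
open WithLp (toLp ofLp)

theorem sq_norm_toLp_eq_dotProduct {n : Type*} [Fintype n] (x : n → ℝ) :
    ‖(toLp 2 x : EuclideanSpace ℝ n)‖ ^ 2 = x ⬝ᵥ x := by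
  rw [← real_inner_self_eq_norm_sq, EuclideanSpace.inner_toLp_toLp, star_trivial]

theorem toLp_mulVec_mem_span_columns {m n : Type*} [Fintype n] (M : Matrix m n ℝ) (x : n → ℝ) :
    (toLp 2 (M *ᵥ x) : EuclideanSpace ℝ m) ∈
      Submodule.span ℝ (Set.range fun j => (toLp 2 (Mᵀ j) : EuclideanSpace ℝ m)) := by
  have h := Submodule.mem_map_of_mem (f := (WithLp.linearEquiv 2 ℝ (m → ℝ)).symm.toLinearMap)
    (LinearMap.mem_range_self M.mulVecLin x)
  rwa [range_mulVecLin, Submodule.map_span, ← Set.range_comp] at h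

section OrthonormalColumns

variable {m n : Type*} [Fintype m] [Fintype n] [DecidableEq n]

theorem norm_toLp_mulVec_of_transpose_mul_self {M : Matrix m n ℝ} (hM : Mᵀ * M = 1)
    (x : n → ℝ) : ‖(toLp 2 (M *ᵥ x) : EuclideanSpace ℝ m)‖ = ‖(toLp 2 x : EuclideanSpace ℝ n)‖ := by
  rw [← sq_eq_sq₀ (norm_nonneg _) (norm_nonneg _), sq_norm_toLp_eq_dotProduct,
    sq_norm_toLp_eq_dotProduct, dotProduct_mulVec, ← mulVec_transpose, mulVec_mulVec, hM,
    one_mulVec]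

theorem starProjection_span_columns {M : Matrix m n ℝ} (hM : Mᵀ * M = 1)
    (v : EuclideanSpace ℝ m) :
    (Submodule.span ℝ (Set.range fun j => (toLp 2 (Mᵀ j) : EuclideanSpace ℝ m))).starProjection v =
      toLp 2 (M *ᵥ (Mᵀ *ᵥ ofLp v)) := by
  refine Submodule.eq_starProjection_of_mem_of_inner_eq_zero
    (toLp_mulVec_mem_span_columns M _) fun w hw => ?_
  refine (Submodule.span_le (p := LinearMap.ker (innerₛₗ ℝ _)) |>.2 ?_) hw
  rintro _ ⟨j, rfl⟩
  have h : Mᵀ *ᵥ (ofLp v - M *ᵥ (Mᵀ *ᵥ ofLp v)) = 0 := by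
    rw [mulVec_sub, mulVec_mulVec, hM, one_mulVec, sub_self]
  simp only [SetLike.mem_coe, LinearMap.mem_ker, innerₛₗ_apply_apply,
    EuclideanSpace.inner_eq_star_dotProduct, star_trivial, WithLp.ofLp_sub]
  exact congrFun h j

end OrthonormalColumns

theorem OrthonormalBasis.mul_inner_apply_le_norm_apply_sq {ι E : Type*} [Fintype ι]
    [NormedAddCommGroup E] [InnerProductSpace ℝ E] (b : OrthonormalBasis ι ℝ E)
    {T : E →ₗ[ℝ] E} (hT : T.IsSymmetric) {μ : ι → ℝ} (hb : ∀ i, T (b i) = μ i • b i)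
    (hμ : ∀ i, 0 ≤ μ i) {r : ℝ} (hrμ : ∀ i, r ≤ μ i) (x : E) :
    r * ⟪x, T x⟫ ≤ ‖T x‖ ^ 2 := by
  have hcoord (i : ι) : ⟪b i, T x⟫ = μ i * ⟪b i, x⟫ := by
    rw [← hT, hb, real_inner_smul_left]
  rw [← b.sum_inner_mul_inner, ← b.sum_sq_inner_right, Finset.mul_sum]
  refine Finset.sum_le_sum fun i _ => ?_
  rw [hcoord, real_inner_comm (b i) x]
  nlinarith [mul_nonneg (mul_nonneg (sub_nonneg.2 (hrμ i)) (hμ i)) (sq_nonneg ⟪b i, x⟫)]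

theorem Matrix.PosSemidef.iInf_eigenvalues_mul_dotProduct_le {n : Type*} [Fintype n]
    [DecidableEq n] {S : Matrix n n ℝ} (hS : S.PosSemidef) (c : n → ℝ) :
    (⨅ i, hS.1.eigenvalues i) * (c ⬝ᵥ S *ᵥ c) ≤ (S *ᵥ c) ⬝ᵥ (S *ᵥ c) := by
  have h := hS.1.eigenvectorBasis.mul_inner_apply_le_norm_apply_sq
    (isSymmetric_toEuclideanLin_iff.2 hS.1)
    (fun i => congrArg (toLp 2) (hS.1.mulVec_eigenvectorBasis i)) hS.eigenvalues_nonneg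
    (fun i => ciInf_le (Set.finite_range _).bddBelow i) (toLp 2 c)
  rwa [toLpLin_toLp, EuclideanSpace.inner_toLp_toLp, star_trivial, dotProduct_comm,
    sq_norm_toLp_eq_dotProduct] at h

theorem smallestSingularValue_mul_norm_le_norm_mulVec_transpose {p q : ℕ}
    (M : Matrix (Fin p) (Fin q) ℝ) (c : Fin p → ℝ) :
    smallestSingularValue M * ‖(toLp 2 (Mᵀ *ᵥ c) : EuclideanSpace ℝ (Fin q))‖ ≤
      ‖(toLp 2 (M *ᵥ (Mᵀ *ᵥ c)) : EuclideanSpace ℝ (Fin p))‖ := by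
  have hS := posSemidef_self_mul_conjTranspose M
  have hquad : c ⬝ᵥ (M * Mᴴ) *ᵥ c = ‖(toLp 2 (Mᵀ *ᵥ c) : EuclideanSpace ℝ (Fin q))‖ ^ 2 := by
    rw [sq_norm_toLp_eq_dotProduct, conjTranspose_eq_transpose_of_trivial, ← mulVec_mulVec,
      dotProduct_mulVec, ← mulVec_transpose]
  have hsq : (M * Mᴴ) *ᵥ c ⬝ᵥ (M * Mᴴ) *ᵥ c =
      ‖(toLp 2 (M *ᵥ (Mᵀ *ᵥ c)) : EuclideanSpace ℝ (Fin p))‖ ^ 2 := by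
    rw [sq_norm_toLp_eq_dotProduct, conjTranspose_eq_transpose_of_trivial, mulVec_mulVec]
  have key := hS.iInf_eigenvalues_mul_dotProduct_le c
  rw [hquad, hsq] at key
  calc smallestSingularValue M * ‖(toLp 2 (Mᵀ *ᵥ c) : EuclideanSpace ℝ (Fin q))‖
      = √((⨅ i, hS.1.eigenvalues i) * ‖(toLp 2 (Mᵀ *ᵥ c) : EuclideanSpace ℝ (Fin q))‖ ^ 2) := by
        rw [Real.sqrt_mul' _ (sq_nonneg _), Real.sqrt_sq (norm_nonneg _)]
        rfl
    _ ≤ √(‖(toLp 2 (M *ᵥ (Mᵀ *ᵥ c)) : EuclideanSpace ℝ (Fin p))‖ ^ 2) := Real.sqrt_le_sqrt key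
    _ = _ := Real.sqrt_sq (norm_nonneg _)

theorem angle_proj_le_maxPrincipalAngle_general (n p q : ℕ)
    (V W : Submodule ℝ (EuclideanSpace ℝ (Fin n)))
    (A : Matrix (Fin n) (Fin p) ℝ) (B : Matrix (Fin n) (Fin q) ℝ)
    (hA : Aᵀ * A = 1) (hB : Bᵀ * B = 1)
    (hAV : Submodule.span ℝ (Set.range fun j => (WithLp.toLp 2 (Aᵀ j) : EuclideanSpace ℝ (Fin n))) = V)
    (hBW : Submodule.span ℝ (Set.range fun j => (WithLp.toLp 2 (Bᵀ j) : EuclideanSpace ℝ (Fin n))) = W)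
    (v : EuclideanSpace ℝ (Fin n)) (hvV : v ∈ V)
    (hPv : ((Submodule.orthogonalProjection W v : W) : EuclideanSpace ℝ (Fin n)) ≠ 0) :
    angleToSubspace V ((Submodule.orthogonalProjection W v : W) : EuclideanSpace ℝ (Fin n)) ≤
      Real.arccos (smallestSingularValue (Aᵀ * B)) := by
  have hPV (x : EuclideanSpace ℝ (Fin n)) : V.starProjection x = toLp 2 (A *ᵥ (Aᵀ *ᵥ ofLp x)) :=
    hAV ▸ starProjection_span_columns hA x
  have hPW (x : EuclideanSpace ℝ (Fin n)) : W.starProjection x = toLp 2 (B *ᵥ (Bᵀ *ᵥ ofLp x)) :=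
    hBW ▸ starProjection_span_columns hB x
  set M := Aᵀ * B
  set c := Aᵀ *ᵥ ofLp v
  have hv : A *ᵥ c = ofLp v := by
    rw [← WithLp.ofLp_toLp 2 (A *ᵥ c), ← hPV, Submodule.starProjection_eq_self_iff.2 hvV]
  have hPWv : (W.orthogonalProjection v : EuclideanSpace ℝ (Fin n)) =
      toLp 2 (B *ᵥ (Mᵀ *ᵥ c)) := by
    rw [← Submodule.starProjection_apply, hPW, ← hv, transpose_mul, transpose_transpose,
      mulVec_mulVec c Bᵀ]
  have hPVPWv : (V.orthogonalProjection (toLp 2 (B *ᵥ (Mᵀ *ᵥ c))) :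
      EuclideanSpace ℝ (Fin n)) = toLp 2 (A *ᵥ (M *ᵥ (Mᵀ *ᵥ c))) := by
    rw [← Submodule.starProjection_apply, hPV, WithLp.ofLp_toLp, mulVec_mulVec _ Aᵀ]
  rw [hPWv] at hPv ⊢
  unfold angleToSubspace
  rw [hPVPWv, norm_toLp_mulVec_of_transpose_mul_self hA,
    norm_toLp_mulVec_of_transpose_mul_self hB]
  have hpos : 0 < ‖(toLp 2 (Mᵀ *ᵥ c) : EuclideanSpace ℝ (Fin q))‖ := by
    rw [← norm_toLp_mulVec_of_transpose_mul_self hB]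
    exact norm_pos_iff.2 hPv
  exact Real.arccos_le_arccos
    ((le_div_iff₀ hpos).2 (smallestSingularValue_mul_norm_le_norm_mulVec_transpose M c))

/-- For subspaces `V, W` of `ℝⁿ` with orthonormal basis matrices `A` (n×p) and `B` (n×q),
`p ≤ q`, and any nonzero `v ∈ V` with `P_W v ≠ 0`, the angle between `P_W v` and `V` is at
most the maximum principal angle between `V` and `W`, namely `arccos` of the smallest
singular value of `Aᵀ B`. (This bounds `θ₂*` by the maximum principal angle.) -/
theorem angle_proj_le_maxPrincipalAngle (n p q : ℕ) (hpq : p ≤ q)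
    (V W : Submodule ℝ (EuclideanSpace ℝ (Fin n)))
    (A : Matrix (Fin n) (Fin p) ℝ) (B : Matrix (Fin n) (Fin q) ℝ)
    (hA : Aᵀ * A = 1) (hB : Bᵀ * B = 1)
    (hAV : Submodule.span ℝ (Set.range fun j => (WithLp.toLp 2 (Aᵀ j) : EuclideanSpace ℝ (Fin n))) = V)
    (hBW : Submodule.span ℝ (Set.range fun j => (WithLp.toLp 2 (Bᵀ j) : EuclideanSpace ℝ (Fin n))) = W)
    (v : EuclideanSpace ℝ (Fin n)) (hvV : v ∈ V) (hv : v ≠ 0)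
    (hPv : ((Submodule.orthogonalProjection W v : W) : EuclideanSpace ℝ (Fin n)) ≠ 0) :
    angleToSubspace V ((Submodule.orthogonalProjection W v : W) : EuclideanSpace ℝ (Fin n)) ≤
      Real.arccos (smallestSingularValue (Aᵀ * B)) :=
  angle_proj_le_maxPrincipalAngle_general n p q V W A B hA hB hAV hBW v hvV hPv
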